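/- First half of the semantics-equivalence proof: for every environment V, expression e, and n ∈ ℕ, if V ⊢ e ⇒ μₙ within n steps, then μₙ ≤ ⟦e⟧_⇓^V pointwise. -/

import Mathlib

set_option maxHeartbeats 1000000

open scoped ENNReal NNRat NNReal
open Classical

noncomputable section

/-! ## Syntax -/

/-- Rational probabilities `p ∈ [0,1]`. -/
abbrev Probability : Type := {p : ℚ≥0 // p ≤ 1}

/-- Expressions of the probabilistic language in share-let-normal form (Figure 3). -/
inductive Expr : Type where
  | var (x : ℕ)                                          -- variable
  | unit                                                 -- null tuple
  | nil                                                  -- empty list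
  | cons (x₁ x₂ : ℕ)                                     -- cons list
  | matL (x : ℕ) (e₀ : Expr) (x₁ x₂ : ℕ) (e₁ : Expr)     -- pattern match
  | fn (f x : ℕ) (e : Expr)                              -- recursive function
  | app (x₁ x₂ : ℕ)                                      -- application
  | tick (q : ℚ≥0)                                       -- cost
  | elet (e₁ : Expr) (x : ℕ) (e₂ : Expr)                 -- definition
  | share (x x₁ x₂ : ℕ) (e : Expr)                       -- sharing
  | flip (p : Probability) (e₁ e₂ : Expr)                -- coin flip
  | prob (p : Probability)                               -- probability literal
  | flipS (x : ℕ) (e₁ e₂ : Expr)                         -- symbolic flip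

/-- Values: unit, lists, probability values and function closures. -/
inductive Val : Type where
  | unit
  | nil
  | cons (v₁ v₂ : Val)
  | prob (p : Probability)
  | clos (V : List (ℕ × Val)) (f x : ℕ) (e : Expr)

/-- Evaluation environments: finite maps from variables to values. -/
abbrev Env : Type := List (ℕ × Val)

/-- Environment lookup `V(x)`. -/
def Env.find : Env → ℕ → Option Val
  | [], _ => none
  | (y, v) :: V, x => if y = x then some v else Env.find V x

/-! ## Trace-based cost semantics (Figure 5) -/

/-- Outcomes of coin flips. -/
inductive Coin : Type where
  | H
  | T

/-- Trace-based evaluation judgment `V ⊢ e ⇓ v | q` with probability `p` and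
trace `σ` (Figure 5). -/
inductive Eval : Env → Expr → Val → ℚ≥0 → ℚ≥0 → List Coin → Prop where
  | var : Env.find V x = some v → Eval V (.var x) v 0 1 []
  | unit : Eval V .unit .unit 0 1 []
  | nil : Eval V .nil .nil 0 1 []
  | cons : Env.find V x₁ = some v₁ → Env.find V x₂ = some v₂ →
      Eval V (.cons x₁ x₂) (.cons v₁ v₂) 0 1 []
  | matL₁ : Env.find V x = some .nil → Eval V e₀ v q p σ →
      Eval V (.matL x e₀ x₁ x₂ e₁) v q p σ
  | matL₂ : Env.find V x = some (.cons v₁ v₂) →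
      Eval ((x₁, v₁) :: (x₂, v₂) :: V) e₁ v q p σ →
      Eval V (.matL x e₀ x₁ x₂ e₁) v q p σ
  | tick : Eval V (.tick q) .unit q 1 []
  | elet : Eval V e₁ v₁ q₁ p₁ σ₁ → Eval ((x, v₁) :: V) e₂ v₂ q₂ p₂ σ₂ →
      Eval V (.elet e₁ x e₂) v₂ (q₁ + q₂) (p₁ * p₂) (σ₁ ++ σ₂)
  | fn : Eval V (.fn f x e) (.clos V f x e) 0 1 []
  | app : Env.find V x₁ = some (.clos V' f x e) → Env.find V x₂ = some v₂ →
      Eval ((f, .clos V' f x e) :: (x, v₂) :: V') e v q p σ →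
      Eval V (.app x₁ x₂) v q p σ
  | flip₁ : Eval V e₁ v₁ q₁ p₁ σ →
      Eval V (.flip p e₁ e₂) v₁ q₁ (p.1 * p₁) (.H :: σ)
  | flip₂ : Eval V e₂ v₂ q₂ p₂ σ →
      Eval V (.flip p e₁ e₂) v₂ q₂ ((1 - p.1) * p₂) (.T :: σ)
  | share : Env.find V x = some v →
      Eval ((x₁, v) :: (x₂, v) :: V) e v' q p σ →
      Eval V (.share x x₁ x₂ e) v' q p σ
  | prob : Eval V (.prob p) (.prob p) 0 1 []
  | flipS₁ : Env.find V x = some (.prob p) → Eval V e₁ v₁ q₁ p₁ σ →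
      Eval V (.flipS x e₁ e₂) v₁ q₁ (p.1 * p₁) (.H :: σ)
  | flipS₂ : Env.find V x = some (.prob p) → Eval V e₂ v₂ q₂ p₂ σ →
      Eval V (.flipS x e₁ e₂) v₂ q₂ ((1 - p.1) * p₂) (.T :: σ)

/-! ## Types and potential (Figure 4) -/

/-- Types: unit, lists `L(⟨τ, q⟩)`, arrows `⟨τ₁,q₁⟩ → ⟨τ₂,q₂⟩`, and
probability types `prob(q_H, q_T)`. -/
inductive Ty : Type where
  | unit
  | list (τ : Ty) (q : ℚ≥0)
  | arrow (τ₁ : Ty) (q₁ : ℚ≥0) (τ₂ : Ty) (q₂ : ℚ≥0)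
  | prob (qH qT : ℚ≥0)

/-- Potential-annotated types `A = ⟨τ, q⟩`. -/
abbrev ATy : Type := Ty × ℚ≥0

/-- The potential function `Φ(v : τ)`. -/
def pot : Val → Ty → ℚ≥0
  | .cons v₁ v₂, .list τ q => (pot v₁ τ + q) + pot v₂ (.list τ q)
  | .prob p, .prob qH qT => qH * p.1 + qT * (1 - p.1)
  | _, _ => 0

/-- The potential function `Φ(v : A)` for annotated types `A = ⟨τ, q⟩`. -/
def potA (v : Val) (A : ATy) : ℚ≥0 := pot v A.1 + A.2

/-- The value `[v₁, …, vₙ]` corresponding to a Lean list of values. -/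
def listVal : List Val → Val
  | [] => .nil
  | v :: vs => .cons v (listVal vs)

/-- The sharing relation `share(τ; τ₁, τ₂)`. -/
inductive Share : Ty → Ty → Ty → Prop where
  | unit : Share .unit .unit .unit
  | list : Share τ τ₁ τ₂ → q = q₁ + q₂ →
      Share (.list τ q) (.list τ₁ q₁) (.list τ₂ q₂)
  | arrow : Share (.arrow τ₁ q₁ τ₂ q₂) (.arrow τ₁ q₁ τ₂ q₂) (.arrow τ₁ q₁ τ₂ q₂)
  | prob : qH = qH₁ + qH₂ → qT = qT₁ + qT₂ →
      Share (.prob qH qT) (.prob qH₁ qT₁) (.prob qH₂ qT₂)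

/-- Sharing for annotated types: `share(⟨τ,q⟩; ⟨τ₁,q₁⟩, ⟨τ₂,q₂⟩)`. -/
def ShareA (A A₁ A₂ : ATy) : Prop := Share A.1 A₁.1 A₂.1 ∧ A.2 = A₁.2 + A₂.2

/-- Potential scaling `p × τ`. -/
def scaleTy (p : ℚ≥0) : Ty → Ty
  | .unit => .unit
  | .list τ q => .list (scaleTy p τ) (p * q)
  | .arrow τ₁ q₁ τ₂ q₂ => .arrow τ₁ q₁ τ₂ q₂
  | .prob qH qT => .prob (p * qH) (p * qT)

/-- Potential scaling `p × A` for annotated types. -/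
def scaleA (p : ℚ≥0) (A : ATy) : ATy := (scaleTy p A.1, p * A.2)

/-- Typing contexts. -/
abbrev Ctx : Type := List (ℕ × Ty)

/-- Scaling of typing contexts `p × Γ`. -/
def scaleCtx (p : ℚ≥0) (Γ : Ctx) : Ctx := Γ.map fun xt => (xt.1, scaleTy p xt.2)

/-- Zeroing of potential annotations `|τ|`. -/
def zeroTy : Ty → Ty
  | .unit => .unit
  | .list τ _ => .list (zeroTy τ) 0
  | .arrow τ₁ q₁ τ₂ q₂ => .arrow τ₁ q₁ τ₂ q₂
  | .prob _ _ => .prob 0 0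

/-- Zeroing of contexts `|Γ|`. -/
def zeroCtx (Γ : Ctx) : Ctx := Γ.map fun xt => (xt.1, zeroTy xt.2)

/-- The sharing relation lifted pointwise to typing contexts. -/
inductive ShareCtx : Ctx → Ctx → Ctx → Prop where
  | nil : ShareCtx [] [] []
  | cons : Share τ τ₁ τ₂ → ShareCtx Γ Γ₁ Γ₂ →
      ShareCtx ((x, τ) :: Γ) ((x, τ₁) :: Γ₁) ((x, τ₂) :: Γ₂)

/-- Subtyping `τ <: τ'`. -/
inductive SubTy : Ty → Ty → Prop where
  | unit : SubTy .unit .unit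
  | list : SubTy τ₁ τ₂ → q₁ ≥ q₂ → SubTy (.list τ₁ q₁) (.list τ₂ q₂)
  | arrow : SubTy τ₂ τ₁ → q₂ ≥ q₁ → SubTy σ₁ σ₂ → p₁ ≥ p₂ →
      SubTy (.arrow τ₁ q₁ σ₁ p₁) (.arrow τ₂ q₂ σ₂ p₂)
  | prob : qH₁ ≥ qH₂ → qT₁ ≥ qT₂ → SubTy (.prob qH₁ qT₁) (.prob qH₂ qT₂)

/-! ## The affine typing judgment (Figure 6) -/

/-- The typing judgment `Γ; q ⊢ e : A` of Figure 6. -/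
inductive Typing : Ctx → ℚ≥0 → Expr → ATy → Prop where
  | var : Typing [(x, τ)] 0 (.var x) (τ, 0)
  | unit : Typing [] 0 .unit (.unit, 0)
  | nil : Typing [] 0 .nil (.list τ p, 0)
  | cons : Typing [(x₁, τ), (x₂, .list τ p)] p (.cons x₁ x₂) (.list τ p, 0)
  | matL : Typing Γ q e₀ B →
      Typing ((x₁, τ) :: (x₂, .list τ p) :: Γ) (q + p) e₁ B →
      Typing ((x, .list τ p) :: Γ) q (.matL x e₀ x₁ x₂ e₁) B
  | tick : Typing [] q (.tick q) (.unit, 0)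
  | elet : Typing Γ₁ q e₁ (τ, p) → Typing ((x, τ) :: Γ₂) p e₂ B →
      Typing (Γ₁ ++ Γ₂) q (.elet e₁ x e₂) B
  | app : Typing [(x₁, .arrow τ q σ p), (x₂, τ)] q (.app x₁ x₂) (σ, p)
  | fn : zeroCtx Γ = Γ →
      Typing ((f, .arrow τ q σ p) :: (x, τ) :: Γ) q e (σ, p) →
      Typing Γ 0 (.fn f x e) (.arrow τ q σ p, 0)
  | share : Share τ τ₁ τ₂ →
      Typing ((x₁, τ₁) :: (x₂, τ₂) :: Γ) q e B →
      Typing ((x, τ) :: Γ) q (.share x x₁ x₂ e) B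
  | flip : ShareCtx Γ (scaleCtx p.1 Γ₁) (scaleCtx (1 - p.1) Γ₂) →
      q = p.1 * q₁ + (1 - p.1) * q₂ →
      Typing Γ₁ q₁ e₁ A → Typing Γ₂ q₂ e₂ A →
      Typing Γ q (.flip p e₁ e₂) A
  | prob : q = p.1 * qH + (1 - p.1) * qT →
      Typing [] q (.prob p) (.prob qH qT, 0)
  | flipS : Typing Γ (q + qH) e₁ A → Typing Γ (q + qT) e₂ A →
      Typing ((x, .prob qH qT) :: Γ) q (.flipS x e₁ e₂) A
  | sub : Typing Γ q e (τ', q') → SubTy τ' τ → Typing Γ q e (τ, q')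
  | sup : Typing ((x, τ) :: Γ) q e B → SubTy τ' τ → Typing ((x, τ') :: Γ) q e B
  | weak : Typing Γ q e B → Typing ((x, τ) :: Γ) q e B
  | relax : ∀ {Γ : Ctx} {p q p' q' : ℚ≥0} {τ : Ty} {e : Expr},
      Typing Γ p e (τ, p') → p ≤ q → (p : ℚ) - (p' : ℚ) ≤ (q : ℚ) - (q' : ℚ) →
      Typing Γ q e (τ, q')
  | exch : Typing Γ q e B → Γ.Perm Γ' → Typing Γ' q e B

/-! ## Value and environment typing (Figure 8) -/

mutual
  /-- The value typing judgment `v : τ` (Figure 8); it ignores potential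
  annotations. -/
  inductive VTy : Val → Ty → Prop where
    | unit : VTy .unit .unit
    | prob : VTy (.prob p) (.prob qH qT)
    | nil : VTy .nil (.list τ q)
    | cons : VTy v₁ τ → VTy v₂ (.list τ q) → VTy (.cons v₁ v₂) (.list τ q)
    | clos : EnvTy V Γ →
        Typing ((f, .arrow τ q σ p) :: (x, τ) :: zeroCtx Γ) q e (σ, p) →
        VTy (.clos V f x e) (.arrow τ q σ p)

  /-- `V : Γ` : the environment `V` has typing context `Γ`. -/
  inductive EnvTy : Env → Ctx → Prop where
    | nil : EnvTy V []
    | cons : Env.find V x = some v → VTy v τ → EnvTy V Γ → EnvTy V ((x, τ) :: Γ)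
end

/-- The potential `Φ(V : Γ)` of an environment with respect to a context. -/
def potCtx (V : Env) (Γ : Ctx) : ℚ≥0 :=
  (Γ.map fun xt => ((Env.find V xt.1).map fun v => pot v xt.2).getD 0).sum

/-! ## Distribution-based cost semantics (Figure 7) -/

/-- Embedding of nonnegative rationals into `ℝ≥0∞`. -/
def qe (q : ℚ≥0) : ℝ≥0∞ := ((q : ℝ≥0) : ℝ≥0∞)

/-- The point distribution `δ(a)`. -/
def dirac {α : Type*} (a : α) : α → ℝ≥0∞ := fun b => if b = a then 1 else 0

/-- Subprobability distributions on value–cost pairs. -/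
abbrev SubDist : Type := Val × ℚ≥0 → ℝ≥0∞

/-- Monadic composition used in rule DE:Let: costs are added. -/
def letBind (μ : SubDist) (κ : Val × ℚ≥0 → SubDist) : SubDist := fun b =>
  ∑' a₁ : Val × ℚ≥0, ∑' a₂ : Val × ℚ≥0,
    μ a₁ * κ a₁ a₂ * dirac (a₂.1, a₁.2 + a₂.2) b

/-- Depth-indexed distribution-based evaluation judgment
`V ⊢ e ⇒ μ` within `n` steps (Figure 7). -/
inductive Step : Env → Expr → SubDist → ℕ → Prop where
  | base : Step V e (fun _ => 0) 0
  | var : 0 < n → Env.find V x = some v → Step V (.var x) (dirac (v, 0)) n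
  | unit : 0 < n → Step V .unit (dirac (.unit, 0)) n
  | nil : 0 < n → Step V .nil (dirac (.nil, 0)) n
  | cons : 0 < n → Env.find V x₁ = some v₁ → Env.find V x₂ = some v₂ →
      Step V (.cons x₁ x₂) (dirac (.cons v₁ v₂, 0)) n
  | matL₁ : Env.find V x = some .nil → Step V e₀ μ n →
      Step V (.matL x e₀ x₁ x₂ e₁) μ (n + 1)
  | matL₂ : Env.find V x = some (.cons v₁ v₂) →
      Step ((x₁, v₁) :: (x₂, v₂) :: V) e₁ μ n →
      Step V (.matL x e₀ x₁ x₂ e₁) μ (n + 1)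
  | tick : 0 < n → Step V (.tick q) (dirac (.unit, q)) n
  | fn : 0 < n → Step V (.fn f x e) (dirac (.clos V f x e, 0)) n
  | app : Env.find V x₁ = some (.clos V' f x e) → Env.find V x₂ = some v₂ →
      Step ((f, .clos V' f x e) :: (x, v₂) :: V') e μ n →
      Step V (.app x₁ x₂) μ (n + 1)
  | elet : Step V e₁ μ n →
      (∀ a : Val × ℚ≥0, μ a ≠ 0 → Step ((x, a.1) :: V) e₂ (κ a) n) →
      Step V (.elet e₁ x e₂) (letBind μ κ) (n + 1)
  | share : Env.find V x = some v →
      Step ((x₁, v) :: (x₂, v) :: V) e μ n →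
      Step V (.share x x₁ x₂ e) μ (n + 1)
  | flip : Step V e₁ μ₁ n → Step V e₂ μ₂ n →
      Step V (.flip p e₁ e₂) (fun a => qe p.1 * μ₁ a + qe (1 - p.1) * μ₂ a) (n + 1)
  | prob : 0 < n → Step V (.prob p) (dirac (.prob p, 0)) n
  | flipS : Env.find V x = some (.prob p) → Step V e₁ μ₁ n → Step V e₂ μ₂ n →
      Step V (.flipS x e₁ e₂) (fun a => qe p.1 * μ₁ a + qe (1 - p.1) * μ₂ a) (n + 1)

/-- `⟦e⟧_⇒^V`: the pointwise supremum of all distributions derivable in the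
depth-indexed distribution-based semantics. -/
def dsem (V : Env) (e : Expr) : SubDist := fun a =>
  ⨆ (n : ℕ) (μ : SubDist) (_ : Step V e μ n), μ a

/-- `⟦e⟧_⇓^V(v, q) = Σ_σ p_σ`, summing the probabilities of all finite traces
with which `e` evaluates to `v` with cost `q`. -/
def tsem (V : Env) (e : Expr) : SubDist := fun a =>
  ∑' σ : List Coin, ⨆ (p : ℚ≥0) (_ : Eval V e a.1 a.2 p σ), qe p

/-- `νₙ`: the restriction of `⟦e⟧_⇓^V` to traces of length at most `n`. -/
def tsemN (V : Env) (e : Expr) (n : ℕ) : SubDist := fun a =>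
  ∑' σ : List Coin,
    if σ.length ≤ n then ⨆ (p : ℚ≥0) (_ : Eval V e a.1 a.2 p σ), qe p else 0

end

/-! By induction on the derivation of `V ⊢ e ⇒ μ`: each rule of the distribution semantics is
mirrored by the corresponding trace rule. A `flip` tags the traces of its branches with `H` and `T`,
so their contributions land on disjoint traces. For `let`, a trace of `e₁` followed by one of `e₂`
is a trace of the `let`, and the split point is recoverable: evaluation is determined by its trace,
and a trace of an expression is never a proper prefix of another. Hence the double sum of the
monadic bind injects into the sum over traces of the `let`. -/

theorem ENNReal.tsum_le_tsum_of_injOn_support {α β : Type*} {f : α → ℝ≥0∞} {g : β → ℝ≥0∞}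
    {m : α → β} (hm : Set.InjOn m (Function.support f)) (hfg : ∀ a, f a ≤ g (m a)) :
    ∑' a, f a ≤ ∑' b, g b :=
  calc ∑' a, f a = ∑' a : Function.support f, f a := (tsum_subtype_support f).symm
    _ ≤ ∑' a : Function.support f, g (m a) := ENNReal.tsum_le_tsum fun a => hfg a
    _ ≤ ∑' b, g b := ENNReal.tsum_comp_le_tsum_of_injective hm.injective g

theorem tsum_cons_add_tsum_cons_le {α : Type*} {c₁ c₂ : α} (hc : c₁ ≠ c₂)
    (g : List α → ℝ≥0∞) : ∑' σ, g (c₁ :: σ) + ∑' σ, g (c₂ :: σ) ≤ ∑' σ, g σ := by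
  have hinj : Function.Injective (Sum.elim (c₁ :: ·) (c₂ :: ·)) :=
    List.cons_injective.sumElim List.cons_injective fun _ _ h => hc (List.cons.inj h).1
  simpa [ENNReal.summable.tsum_sum ENNReal.summable] using
    ENNReal.tsum_comp_le_tsum_of_injective hinj g

theorem List.prefix_or_prefix_of_append {α : Type*} {l₁ l₂ l₁' l₂' : List α}
    (h : l₁ ++ l₂ <+: l₁' ++ l₂' ∨ l₁' ++ l₂' <+: l₁ ++ l₂) : l₁ <+: l₁' ∨ l₁' <+: l₁ := by
  rcases h with h | h
  · exact prefix_or_prefix_of_prefix ((prefix_append _ _).trans h) (prefix_append _ _)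
  · exact (prefix_or_prefix_of_prefix ((prefix_append _ _).trans h) (prefix_append _ _)).symm

theorem Eval.eq_of_prefix {V : Env} {e : Expr} {v v' : Val} {q q' p p' : ℚ≥0}
    {σ σ' : List Coin} (h : Eval V e v q p σ) (h' : Eval V e v' q' p' σ')
    (hσ : σ <+: σ' ∨ σ' <+: σ) : v = v' ∧ q = q' ∧ σ = σ' := by
  induction h generalizing v' q' p' σ' with
  | elet _ _ ih₁ ih₂ =>
    cases h' with
    | elet h₁' h₂' =>
      obtain ⟨rfl, rfl, rfl⟩ := ih₁ h₁' (List.prefix_or_prefix_of_append hσ)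
      obtain ⟨rfl, rfl, rfl⟩ := ih₂ h₂'
        (by simpa only [List.prefix_append_right_inj] using hσ)
      simp
  | _ => cases h' <;> simp_all [List.cons_prefix_cons] <;> solve_by_elim

theorem Eval.eq_of_elet_split {V : Env} {e₁ e₂ : Expr} {x : ℕ} {a₁ a₂ a₁' a₂' : Val × ℚ≥0}
    {p₁ p₂ p₁' p₂' : ℚ≥0} {σ₁ σ₂ σ₁' σ₂' : List Coin}
    (h₁ : Eval V e₁ a₁.1 a₁.2 p₁ σ₁) (h₂ : Eval ((x, a₁.1) :: V) e₂ a₂.1 a₂.2 p₂ σ₂)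
    (h₁' : Eval V e₁ a₁'.1 a₁'.2 p₁' σ₁') (h₂' : Eval ((x, a₁'.1) :: V) e₂ a₂'.1 a₂'.2 p₂' σ₂')
    (hσ : σ₁ ++ σ₂ = σ₁' ++ σ₂') : a₁ = a₁' ∧ a₂ = a₂' ∧ σ₁ = σ₁' ∧ σ₂ = σ₂' := by
  obtain ⟨hv₁, hq₁, rfl⟩ :=
    h₁.eq_of_prefix h₁' (List.prefix_or_prefix_of_append (Or.inl (by rw [hσ])))
  obtain rfl : a₁ = a₁' := Prod.ext hv₁ hq₁
  obtain rfl := List.append_cancel_left hσ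
  obtain ⟨hv₂, hq₂, -⟩ := h₂.eq_of_prefix h₂' (Or.inl (List.prefix_refl _))
  exact ⟨rfl, Prod.ext hv₂ hq₂, rfl, rfl⟩

theorem qe_mul (a b : ℚ≥0) : qe (a * b) = qe a * qe b := by simp [qe]

noncomputable def traceProb (V : Env) (e : Expr) (a : Val × ℚ≥0) (σ : List Coin) : ℝ≥0∞ :=
  ⨆ (p : ℚ≥0) (_ : Eval V e a.1 a.2 p σ), qe p

theorem tsem_eq_tsum_traceProb (V : Env) (e : Expr) (a : Val × ℚ≥0) :
    tsem V e a = ∑' σ, traceProb V e a σ := rfl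

section traceProb

variable {V V₁ V₂ : Env} {e e₁ e₂ : Expr} {a : Val × ℚ≥0} {σ σ₁ : List Coin}

theorem qe_le_traceProb {p : ℚ≥0} (h : Eval V e a.1 a.2 p σ) : qe p ≤ traceProb V e a σ :=
  le_iSup₂ (f := fun p (_ : Eval V e a.1 a.2 p σ) => qe p) p h

theorem exists_eval_of_traceProb_ne_zero (h : traceProb V e a σ ≠ 0) :
    ∃ p, Eval V e a.1 a.2 p σ := by
  by_contra! hne
  simp [traceProb, hne] at h

theorem mul_traceProb_le {c : ℚ≥0}
    (h : ∀ p, Eval V₁ e₁ a.1 a.2 p σ₁ → Eval V e a.1 a.2 (c * p) σ) :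
    qe c * traceProb V₁ e₁ a σ₁ ≤ traceProb V e a σ := by
  simp only [traceProb, ENNReal.mul_iSup]
  exact iSup₂_le fun p hp => qe_mul c p ▸ qe_le_traceProb (h p hp)

theorem dirac_le_tsem {v : Val} {q : ℚ≥0} (h : Eval V e v q 1 []) :
    dirac (v, q) ≤ tsem V e := by
  intro a
  by_cases ha : a = (v, q)
  · subst ha
    calc dirac (v, q) (v, q) = qe 1 := by simp [dirac, qe]
      _ ≤ traceProb V e (v, q) [] := qe_le_traceProb h
      _ ≤ tsem V e (v, q) := ENNReal.le_tsum _
  · simp [dirac, ha]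

theorem tsem_mono (h : ∀ v q p σ, Eval V₁ e₁ v q p σ → Eval V e v q p σ) :
    tsem V₁ e₁ ≤ tsem V e := fun _ =>
  ENNReal.tsum_le_tsum fun _ => iSup₂_le fun _ hp => qe_le_traceProb (h _ _ _ _ hp)

theorem mul_add_mul_le_tsem {c₁ c₂ : ℚ≥0} {μ₁ μ₂ : SubDist}
    (hμ₁ : μ₁ ≤ tsem V₁ e₁) (hμ₂ : μ₂ ≤ tsem V₂ e₂)
    (h₁ : ∀ v q p σ, Eval V₁ e₁ v q p σ → Eval V e v q (c₁ * p) (.H :: σ))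
    (h₂ : ∀ v q p σ, Eval V₂ e₂ v q p σ → Eval V e v q (c₂ * p) (.T :: σ)) :
    (fun a => qe c₁ * μ₁ a + qe c₂ * μ₂ a) ≤ tsem V e := by
  intro a
  calc qe c₁ * μ₁ a + qe c₂ * μ₂ a ≤ qe c₁ * tsem V₁ e₁ a + qe c₂ * tsem V₂ e₂ a := by
        gcongr
        exacts [hμ₁ a, hμ₂ a]
    _ = ∑' σ, qe c₁ * traceProb V₁ e₁ a σ + ∑' σ, qe c₂ * traceProb V₂ e₂ a σ := by
        simp only [tsem_eq_tsum_traceProb, ENNReal.tsum_mul_left]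
    _ ≤ ∑' σ, traceProb V e a (.H :: σ) + ∑' σ, traceProb V e a (.T :: σ) := by
        gcongr with σ σ
        exacts [mul_traceProb_le (h₁ _ _ · σ), mul_traceProb_le (h₂ _ _ · σ)]
    _ ≤ tsem V e a := tsum_cons_add_tsum_cons_le (nofun : Coin.H ≠ Coin.T) _

end traceProb

theorem letBind_mono {μ μ' : SubDist} {κ κ' : Val × ℚ≥0 → SubDist} (hμ : μ ≤ μ')
    (hκ : ∀ a, μ a ≠ 0 → κ a ≤ κ' a) : letBind μ κ ≤ letBind μ' κ' := by
  intro b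
  refine ENNReal.tsum_le_tsum fun a₁ => ENNReal.tsum_le_tsum fun a₂ => ?_
  by_cases h : μ a₁ = 0
  · simp [h]
  · gcongr
    exacts [hμ a₁, hκ a₁ h a₂]

section elet

variable {V : Env} {e₁ e₂ : Expr} {x : ℕ}

theorem traceProb_mul_traceProb_le (a₁ a₂ : Val × ℚ≥0) (σ₁ σ₂ : List Coin) :
    traceProb V e₁ a₁ σ₁ * traceProb ((x, a₁.1) :: V) e₂ a₂ σ₂ ≤
      traceProb V (.elet e₁ x e₂) (a₂.1, a₁.2 + a₂.2) (σ₁ ++ σ₂) := by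
  simp only [traceProb, ENNReal.iSup_mul, ENNReal.mul_iSup, iSup_le_iff]
  intro p₂ h₂ p₁ h₁
  rw [← qe_mul]
  exact qe_le_traceProb (a := (a₂.1, a₁.2 + a₂.2)) (Eval.elet h₁ h₂)

theorem letBind_tsem_le_tsem_elet :
    letBind (tsem V e₁) (fun a => tsem ((x, a.1) :: V) e₂) ≤ tsem V (.elet e₁ x e₂) := by
  intro b
  let F : (Val × ℚ≥0) × (Val × ℚ≥0) × List Coin × List Coin → ℝ≥0∞ := fun t =>
    traceProb V e₁ t.1 t.2.2.1 * traceProb ((x, t.1.1) :: V) e₂ t.2.1 t.2.2.2 *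
      dirac (t.2.1.1, t.1.2 + t.2.1.2) b
  have hF : letBind (tsem V e₁) (fun a => tsem ((x, a.1) :: V) e₂) b = ∑' t, F t := by
    simp only [F, letBind, tsem_eq_tsum_traceProb, ENNReal.tsum_prod', ← ENNReal.tsum_mul_right,
      ← ENNReal.tsum_mul_left]
    exact tsum_congr fun _ => tsum_congr fun _ => tsum_congr fun _ => tsum_congr fun _ =>
      ENNReal.tsum_comm
  have hsupp : ∀ t ∈ Function.support F, (∃ p, Eval V e₁ t.1.1 t.1.2 p t.2.2.1) ∧
      ∃ p, Eval ((x, t.1.1) :: V) e₂ t.2.1.1 t.2.1.2 p t.2.2.2 := fun t ht =>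
    have hne := left_ne_zero_of_mul ht
    ⟨exists_eval_of_traceProb_ne_zero (left_ne_zero_of_mul hne),
      exists_eval_of_traceProb_ne_zero (right_ne_zero_of_mul hne)⟩
  rw [hF, tsem_eq_tsum_traceProb]
  refine ENNReal.tsum_le_tsum_of_injOn_support (m := fun t => t.2.2.1 ++ t.2.2.2) ?_ ?_
  · rintro ⟨a₁, a₂, σ₁, σ₂⟩ ht ⟨a₁', a₂', σ₁', σ₂'⟩ ht' (hσ : σ₁ ++ σ₂ = σ₁' ++ σ₂')
    obtain ⟨⟨p₁, h₁⟩, ⟨p₂, h₂⟩⟩ := hsupp _ ht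
    obtain ⟨⟨p₁', h₁'⟩, ⟨p₂', h₂'⟩⟩ := hsupp _ ht'
    obtain ⟨rfl, rfl, rfl, rfl⟩ := h₁.eq_of_elet_split h₂ h₁' h₂' hσ
    rfl
  · rintro ⟨a₁, a₂, σ₁, σ₂⟩
    by_cases hb : b = (a₂.1, a₁.2 + a₂.2)
    · subst hb
      simpa [F, dirac] using traceProb_mul_traceProb_le a₁ a₂ σ₁ σ₂
    · simp [F, dirac, hb]

end elet

/-- **First half of the semantics-equivalence proof**: for every environment
`V`, expression `e`, and `n ∈ ℕ`, if `V ⊢ e ⇒ μₙ` within `n` steps, then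
`μₙ ≤ ⟦e⟧_⇓^V` pointwise. -/
theorem step_le_tsem (V : Env) (e : Expr) (n : ℕ) (μ : SubDist)
    (h : Step V e μ n) : ∀ a : Val × ℚ≥0, μ a ≤ tsem V e a := by
  induction h with
  | base => exact fun _ => zero_le
  | var _ hx => exact dirac_le_tsem (.var hx)
  | unit => exact dirac_le_tsem .unit
  | nil => exact dirac_le_tsem .nil
  | cons _ hx₁ hx₂ => exact dirac_le_tsem (.cons hx₁ hx₂)
  | tick => exact dirac_le_tsem .tick
  | fn => exact dirac_le_tsem .fn
  | prob => exact dirac_le_tsem .prob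
  | matL₁ hx _ ih => exact le_trans ih (tsem_mono fun _ _ _ _ => .matL₁ hx)
  | matL₂ hx _ ih => exact le_trans ih (tsem_mono fun _ _ _ _ => .matL₂ hx)
  | app hx₁ hx₂ _ ih => exact le_trans ih (tsem_mono fun _ _ _ _ => .app hx₁ hx₂)
  | share hx _ ih => exact le_trans ih (tsem_mono fun _ _ _ _ => .share hx)
  | elet _ _ ih ihκ => exact le_trans (letBind_mono ih ihκ) letBind_tsem_le_tsem_elet
  | flip _ _ ih₁ ih₂ =>
    exact mul_add_mul_le_tsem ih₁ ih₂ (fun _ _ _ _ => .flip₁) fun _ _ _ _ => .flip₂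
  | flipS hx _ _ ih₁ ih₂ =>
    exact mul_add_mul_le_tsem ih₁ ih₂ (fun _ _ _ _ => .flipS₁ hx) fun _ _ _ _ => .flipS₂ hx
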